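/- Let q = p^n be a prime power, k a nontrivial divisor of q-1 with q = ek+1, g a primitive element of 𝔽_q, and f(x) = Σ_{i=0}^{k-1} a_i x^i ∈ ℤ[x]. If p > ((k/φ(k)) Σ_{i=0}^{k-1} a_i^2)^{φ(k)/(2·ord_k(p))}, then f(g^e) = 0 in 𝔽_q if and only if f(ζ_k) = 0 in ℂ. -/

import Mathlib

/-!
Let `β = g ^ e`, a primitive `k`-th root of unity in `F`, and `P = ∑ aᵢ Xⁱ`. If `P(ζ) = 0` then
`Φ_k ∣ P` in `ℤ[X]`, so `P(β) = 0`. Conversely, suppose `P(β) = 0` but `P(ζ) ≠ 0`, and let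
`N = ∏_{t ⊥ k} P(ζ ^ t)`, a nonzero integer. Lifting `β` to its Teichmüller representative `τ` in
the Witt vectors `𝕎 F`, also `N = ∏_{t ⊥ k} P(τ ^ t)`, and the `d = ord_k(p)` factors with
`t ≡ p ^ i` reduce to Frobenius conjugates of `P(β) = 0`, so `p ^ d ∣ N`. On the other hand AM-GM
and Parseval's identity over the `k`-th roots of unity give
`N ^ 2 ≤ ((k / φ(k)) ∑ aᵢ ^ 2) ^ φ(k) < p ^ (2 d)`, a contradiction.
-/

open Polynomial Finset ComplexConjugate

section

variable {k : ℕ}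

theorem IsPrimitiveRoot.aeval_cyclotomic_eq_zero {R : Type*} [CommRing R] [IsDomain R] {μ : R}
    (hμ : IsPrimitiveRoot μ k) (hk : 0 < k) : aeval μ (cyclotomic k ℤ) = 0 := by
  rw [aeval_def, eval₂_eq_eval_map, algebraMap_int_eq, map_cyclotomic_int]
  exact hμ.isRoot_cyclotomic hk

theorem IsPrimitiveRoot.cyclotomic_dvd_of_aeval_eq_zero {K : Type*} [Field K] [CharZero K]
    {μ : K} (hμ : IsPrimitiveRoot μ k) (hk : 0 < k) {P : ℤ[X]} (hP : aeval μ P = 0) :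
    cyclotomic k ℤ ∣ P := by
  rw [cyclotomic_eq_minpoly hμ hk]
  exact minpoly.isIntegrallyClosed_dvd (hμ.isIntegral hk) hP

theorem IsPrimitiveRoot.prod_pow_coprime_eq_prod_primitiveRoots {R M : Type*} [CommRing R]
    [IsDomain R] [CommMonoid M] {ζ : R} (hζ : IsPrimitiveRoot ζ k) (hk : 0 < k) (f : R → M) :
    ∏ t ∈ {t ∈ range k | k.Coprime t}, f (ζ ^ t) = ∏ μ ∈ primitiveRoots k R, f μ := by
  refine prod_nbij (ζ ^ ·) (fun t ht => ?_) (fun i hi j hj hij => ?_) (fun μ hμ => ?_)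
    fun _ _ => rfl
  · simp only [mem_filter, mem_range] at ht
    exact (mem_primitiveRoots hk).2 (hζ.pow_of_coprime t ht.2.symm)
  · simp only [mem_coe, mem_filter, mem_range] at hi hj
    exact hζ.pow_inj hi.1 hj.1 hij
  · have : NeZero k := ⟨hk.ne'⟩
    rw [mem_coe, mem_primitiveRoots hk, hζ.isPrimitiveRoot_iff] at hμ
    obtain ⟨t, htk, ht, rfl⟩ := hμ
    exact ⟨t, by simpa using ⟨htk, ht.symm⟩, rfl⟩

/-- The norm `N_{ℚ(ζ_k)/ℚ}(P(ζ_k))`, computed as the remainder of `∏_{t ⊥ k} P(X ^ t)` modulo `Φ_k`,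
which is a constant. -/
noncomputable def cyclotomicNorm (k : ℕ) (P : ℤ[X]) : ℤ :=
  ((∏ t ∈ {t ∈ range k | k.Coprime t}, P.comp (X ^ t)) %ₘ cyclotomic k ℤ).coeff 0

theorem prod_comp_modByMonic_cyclotomic_eq_C (hk : 0 < k) (P : ℤ[X]) :
    (∏ t ∈ {t ∈ range k | k.Coprime t}, P.comp (X ^ t)) %ₘ cyclotomic k ℤ =
      C (cyclotomicNorm k P) := by
  set r := (∏ t ∈ {t ∈ range k | k.Coprime t}, P.comp (X ^ t)) %ₘ cyclotomic k ℤ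
  have hζ := Complex.isPrimitiveRoot_exp k hk.ne'
  set c := ∏ μ ∈ primitiveRoots k ℂ, aeval μ P
  -- `r` has degree `< φ k` and takes the same value `c` at all `φ k` primitive roots in `ℂ`
  have hval : ∀ μ ∈ primitiveRoots k ℂ, (r.map (algebraMap ℤ ℂ)).eval μ = (C c).eval μ := by
    intro μ hμ
    have hμ := (mem_primitiveRoots hk).1 hμ
    rw [eval_map_algebraMap, aeval_modByMonic_eq_self_of_root (hμ.aeval_cyclotomic_eq_zero hk),
      eval_C, map_prod]
    simpa [aeval_comp] using hμ.prod_pow_coprime_eq_prod_primitiveRoots hk (aeval · P)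
  have hdeg : (r.map (algebraMap ℤ ℂ) - C c).degree < #(primitiveRoots k ℂ) := by
    rw [hζ.card_primitiveRoots]
    refine (degree_sub_le _ _).trans_lt (max_lt ?_ ?_)
    · exact degree_map_le.trans_lt ((degree_modByMonic_lt _ (cyclotomic.monic k ℤ)).trans_eq
        (degree_cyclotomic k ℤ))
    · exact degree_C_le.trans_lt (by exact_mod_cast Nat.totient_pos.2 hk)
  have hmap := eq_of_degree_sub_lt_of_eval_finset_eq _ hdeg hval
  apply map_injective (algebraMap ℤ ℂ) (algebraMap ℤ ℂ).injective_int
  rw [hmap, map_C]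
  congr 1
  exact (by simpa using congrArg (coeff · 0) hmap.symm : c = (r.coeff 0 : ℂ))

theorem prod_aeval_pow_eq_cyclotomicNorm {A : Type*} [CommRing A] (hk : 0 < k) (P : ℤ[X]) {x : A}
    (hx : aeval x (cyclotomic k ℤ) = 0) :
    ∏ t ∈ {t ∈ range k | k.Coprime t}, aeval (x ^ t) P = cyclotomicNorm k P := by
  have := congrArg (aeval x) (prod_comp_modByMonic_cyclotomic_eq_C hk P)
  rw [aeval_modByMonic_eq_self_of_root hx, map_prod, aeval_C] at this
  simpa [aeval_comp] using this

theorem cyclotomicNorm_ne_zero {K : Type*} [Field K] [CharZero K] {ζ : K}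
    (hζ : IsPrimitiveRoot ζ k) (hk : 0 < k) {P : ℤ[X]} (hP : aeval ζ P ≠ 0) :
    cyclotomicNorm k P ≠ 0 := by
  have hN := prod_aeval_pow_eq_cyclotomicNorm hk P (hζ.aeval_cyclotomic_eq_zero hk)
  refine fun h0 => prod_ne_zero_iff.2 (fun t ht hPt => hP ?_) (hN.trans (by simp [h0]))
  obtain ⟨R, hR⟩ := (hζ.pow_of_coprime t (mem_filter.1 ht).2.symm).cyclotomic_dvd_of_aeval_eq_zero
    hk hPt
  rw [hR, map_mul, hζ.aeval_cyclotomic_eq_zero hk, zero_mul]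

theorem IsPrimitiveRoot.sum_pow_mul_conj_pow {ζ : ℂ} (hζ : IsPrimitiveRoot ζ k) {i i' : ℕ}
    (hi : i < k) (hi' : i' < k) :
    ∑ j ∈ range k, (ζ ^ j) ^ i * conj ((ζ ^ j) ^ i') = if i = i' then (k : ℂ) else 0 := by
  have hk : k ≠ 0 := by omega
  have hζζ : ζ * conj ζ = 1 := by
    rw [Complex.mul_conj, Complex.normSq_eq_norm_sq, hζ.norm'_eq_one hk]
    simp
  set u := ζ ^ i * conj ζ ^ i'
  have hu : ∀ j, (ζ ^ j) ^ i * conj ((ζ ^ j) ^ i') = u ^ j := fun j => by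
    simp only [map_pow, u]
    ring
  simp only [hu]
  split_ifs with h
  · simp [u, h, ← mul_pow, hζζ]
  · have hu1 : u ≠ 1 := fun hu1 => h <| hζ.pow_inj hi hi' <| calc
      ζ ^ i = ζ ^ i * (ζ * conj ζ) ^ i' := by rw [hζζ, one_pow, mul_one]
      _ = u * ζ ^ i' := by ring
      _ = ζ ^ i' := by rw [hu1, one_mul]
    have huk : u ^ k = 1 := by
      rw [show u ^ k = (ζ ^ k) ^ i * conj (ζ ^ k) ^ i' by simp only [u, map_pow]; ring,
        hζ.pow_eq_one, map_one, one_pow, one_pow, one_mul]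
    rw [geom_sum_eq hu1, huk, sub_self, zero_div]

theorem IsPrimitiveRoot.sum_normSq_eval_pow {ζ : ℂ} (hζ : IsPrimitiveRoot ζ k) (c : ℕ → ℂ) :
    ∑ j ∈ range k, Complex.normSq (∑ i ∈ range k, c i * (ζ ^ j) ^ i) =
      k * ∑ i ∈ range k, Complex.normSq (c i) := by
  apply Complex.ofReal_injective
  push_cast
  simp_rw [← Complex.mul_conj, map_sum, map_mul, sum_mul_sum, mul_sum]
  calc ∑ j ∈ range k, ∑ i ∈ range k, ∑ i' ∈ range k,
          c i * (ζ ^ j) ^ i * (conj (c i') * conj ((ζ ^ j) ^ i'))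
      = ∑ i ∈ range k, ∑ i' ∈ range k,
          c i * conj (c i') * ∑ j ∈ range k, (ζ ^ j) ^ i * conj ((ζ ^ j) ^ i') := by
        rw [sum_comm]
        refine sum_congr rfl fun i _ => ?_
        rw [sum_comm]
        refine sum_congr rfl fun i' _ => ?_
        rw [mul_sum]
        exact sum_congr rfl fun j _ => by ring
    _ = ∑ i ∈ range k, (k : ℂ) * (c i * conj (c i)) := by
        refine sum_congr rfl fun i hi => ?_
        rw [sum_congr rfl fun i' hi' => by
          rw [hζ.sum_pow_mul_conj_pow (mem_range.1 hi) (mem_range.1 hi')]]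
        simp [hi, mul_comm]

theorem Real.prod_le_mean_pow {ι : Type*} (s : Finset ι) {z : ι → ℝ} (hz : ∀ i ∈ s, 0 ≤ z i) :
    ∏ i ∈ s, z i ≤ ((∑ i ∈ s, z i) / #s) ^ #s := by
  rcases s.eq_empty_or_nonempty with rfl | hs
  · simp
  have hcard : (0 : ℝ) < #s := by exact_mod_cast hs.card_pos
  have h := Real.geom_mean_le_arith_mean s (fun _ => 1) z (fun _ _ => zero_le_one)
    (by simpa using hcard) hz
  simp only [Real.rpow_one, sum_const, nsmul_eq_mul, mul_one, one_mul] at h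
  have hprod : 0 ≤ ∏ i ∈ s, z i := prod_nonneg hz
  calc ∏ i ∈ s, z i = ((∏ i ∈ s, z i) ^ ((#s : ℝ)⁻¹)) ^ #s := by
        rw [← Real.rpow_natCast, ← Real.rpow_mul hprod, inv_mul_cancel₀ hcard.ne', Real.rpow_one]
    _ ≤ ((∑ i ∈ s, z i) / #s) ^ #s := by gcongr

theorem Real.pow_lt_pow_of_rpow_div_lt {B y : ℝ} {n m : ℕ} (hB : 0 ≤ B) (hm : 0 < m)
    (h : B ^ ((n : ℝ) / m) < y) : B ^ n < y ^ m := by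
  have hm' : (0 : ℝ) < m := by exact_mod_cast hm
  calc B ^ n = (B ^ ((n : ℝ) / m)) ^ m := by
        rw [← Real.rpow_natCast _ m, ← Real.rpow_mul hB, div_mul_cancel₀ _ hm'.ne',
          Real.rpow_natCast]
    _ < y ^ m := by gcongr

theorem IsPrimitiveRoot.cyclotomicNorm_sq_le {ζ : ℂ} (hζ : IsPrimitiveRoot ζ k) (hk : 0 < k)
    (a : ℕ → ℤ) :
    (cyclotomicNorm k (∑ i ∈ range k, C (a i) * X ^ i) : ℝ) ^ 2 ≤
      ((k / k.totient) * ∑ i ∈ range k, (a i : ℝ) ^ 2) ^ k.totient := by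
  set P : ℤ[X] := ∑ i ∈ range k, C (a i) * X ^ i
  set S := {t ∈ range k | k.Coprime t}
  have hS : #S = k.totient := (Nat.totient_eq_card_coprime k).symm
  have hnormSq : ∀ t, Complex.normSq (aeval (ζ ^ t) P) =
      Complex.normSq (∑ i ∈ range k, (a i : ℂ) * (ζ ^ t) ^ i) := fun t => by simp [P]
  calc (cyclotomicNorm k P : ℝ) ^ 2 = ∏ t ∈ S, Complex.normSq (aeval (ζ ^ t) P) := by
        rw [← map_prod, prod_aeval_pow_eq_cyclotomicNorm hk P (hζ.aeval_cyclotomic_eq_zero hk),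
          Complex.normSq_intCast, sq]
    _ ≤ ((∑ t ∈ S, Complex.normSq (aeval (ζ ^ t) P)) / k.totient) ^ k.totient := by
        rw [← hS]
        exact Real.prod_le_mean_pow S fun _ _ => Complex.normSq_nonneg _
    _ ≤ ((∑ t ∈ range k, Complex.normSq (aeval (ζ ^ t) P)) / k.totient) ^ k.totient := by
        gcongr
        · exact div_nonneg (sum_nonneg fun _ _ => Complex.normSq_nonneg _) (Nat.cast_nonneg _)
        · exact fun _ _ _ => Complex.normSq_nonneg _
        · exact filter_subset k.Coprime (range k)
    _ = ((k / k.totient) * ∑ i ∈ range k, (a i : ℝ) ^ 2) ^ k.totient := by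
        simp only [hnormSq, hζ.sum_normSq_eval_pow, Complex.normSq_intCast, sq]
        ring

theorem aeval_pow_char_pow_eq_zero {R : Type*} [CommRing R] (p : ℕ) [ExpChar R p] {P : ℤ[X]}
    {x : R} (hx : aeval x P = 0) (i : ℕ) : aeval (x ^ p ^ i) P = 0 := by
  have := aeval_algHom_apply (iterateFrobenius R p i).toIntAlgHom x P
  rwa [hx, map_zero] at this

namespace WittVector

variable {p : ℕ} [Fact p.Prime] {F : Type*} [Field F] [CharP F p]

theorem p_dvd_of_coeff_zero_eq_zero [PerfectRing F p] {x : WittVector p F} (hx : x.coeff 0 = 0) :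
    (p : WittVector p F) ∣ x := by
  rcases eq_or_ne x 0 with rfl | hx0
  · exact dvd_zero _
  obtain ⟨m, b, hb0, rfl⟩ := exists_eq_pow_p_mul x hx0
  cases m with
  | zero => simp_all
  | succ m => exact ⟨p ^ m * b, by ring⟩

theorem intCast_dvd_of_pow_dvd {j : ℕ} {c : ℤ}
    (h : (p : WittVector p F) ^ j ∣ (c : WittVector p F)) : (p : ℤ) ^ j ∣ c := by
  induction j generalizing c with
  | zero => exact one_dvd _
  | succ j ih =>
    obtain ⟨c', rfl⟩ : (p : ℤ) ∣ c := by
      obtain ⟨y, hy⟩ := (dvd_pow_self _ j.succ_ne_zero).trans h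
      rw [← CharP.intCast_eq_zero_iff F p, ← map_intCast (constantCoeff (p := p) (R := F)), hy,
        map_mul, map_natCast, CharP.cast_eq_zero, zero_mul]
    rw [pow_succ', Int.cast_mul, Int.cast_natCast] at h
    rw [pow_succ']
    exact mul_dvd_mul_left _ (ih ((mul_dvd_mul_iff_left (p_nonzero p F)).1 h))

end WittVector

theorem IsPrimitiveRoot.pow_orderOf_dvd_cyclotomicNorm {p : ℕ} [Fact p.Prime] {F : Type*}
    [Field F] [CharP F p] [PerfectRing F p] {β : F} (hβ : IsPrimitiveRoot β k) (hk : 0 < k)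
    {P : ℤ[X]} (hP : aeval β P = 0) : (p : ℤ) ^ orderOf (p : ZMod k) ∣ cyclotomicNorm k P := by
  set d := orderOf (p : ZMod k)
  rcases d.eq_zero_or_pos with hd | hd
  · simp [hd]
  have hpk : p.Coprime k := (ZMod.isUnit_iff_coprime p k).1 (orderOf_pos_iff.1 hd).isUnit
  -- `p` is a prime element of the characteristic-zero ring `𝕎 F`, where `β` lifts to `τ`.
  set τ := WittVector.teichmuller p β
  have hτ : IsPrimitiveRoot τ k := hβ.map_of_injective fun a b h => by
    simpa using congrArg (WittVector.coeff · 0) h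
  have hfactor : ∀ i, (p : WittVector p F) ∣ aeval (τ ^ (p ^ i % k)) P := fun i => by
    apply WittVector.p_dvd_of_coeff_zero_eq_zero
    have hmod : β ^ (p ^ i % k) = β ^ p ^ i := by rw [hβ.eq_orderOf, pow_mod_orderOf]
    rw [← WittVector.constantCoeff_apply, ← RingHom.toIntAlgHom_apply, ← aeval_algHom_apply,
      RingHom.toIntAlgHom_apply, map_pow, WittVector.constantCoeff_apply,
      WittVector.teichmuller_coeff_zero, hmod]
    exact aeval_pow_char_pow_eq_zero p hP i
  have hinj : Set.InjOn (fun i => p ^ i % k) (range d) := fun i hi j hj hij => by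
    apply pow_injOn_Iio_orderOf (x := (p : ZMod k)) (by simpa using hi) (by simpa using hj)
    have := congrArg (Nat.cast : ℕ → ZMod k) hij
    simpa only [ZMod.natCast_mod, Nat.cast_pow] using this
  have hsub : (range d).image (fun i => p ^ i % k) ⊆ {t ∈ range k | k.Coprime t} := by
    intro t ht
    obtain ⟨i, -, rfl⟩ := mem_image.1 ht
    simp only [mem_filter, mem_range]
    refine ⟨Nat.mod_lt _ hk, ?_⟩
    rw [Nat.Coprime, Nat.gcd_comm, ← Nat.gcd_rec]
    exact (hpk.pow_left i).symm
  apply WittVector.intCast_dvd_of_pow_dvd (F := F)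
  rw [← prod_aeval_pow_eq_cyclotomicNorm hk P (hτ.aeval_cyclotomic_eq_zero hk)]
  calc (p : WittVector p F) ^ d = ∏ i ∈ range d, (p : WittVector p F) := by simp
    _ ∣ ∏ i ∈ range d, aeval (τ ^ (p ^ i % k)) P := prod_dvd_prod_of_dvd _ _ fun i _ => hfactor i
    _ = ∏ t ∈ (range d).image (fun i => p ^ i % k), aeval (τ ^ t) P :=
        (prod_image (f := fun t => aeval (τ ^ t) P) hinj).symm
    _ ∣ _ := prod_dvd_prod_of_subset _ _ _ hsub

end

theorem transfer_eq_general (p n q e k : ℕ) (hp : p.Prime) (hn : 0 < n) (hq : q = p ^ n)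
    (hk : 1 < k) (hek : q = e * k + 1)
    (F : Type) [Field F] [Fintype F] (hF : Fintype.card F = q)
    (g : F) (hg : IsPrimitiveRoot g (q - 1))
    (a : ℕ → ℤ) (ζ : ℂ) (hζ : IsPrimitiveRoot ζ k)
    (hbound : ((((k : ℝ) / (Nat.totient k)) * ∑ i ∈ Finset.range k, (a i : ℝ) ^ 2)
        ^ ((Nat.totient k : ℝ) / (2 * (orderOf (p : ZMod k) : ℝ))) < p)) :
    (∑ i ∈ Finset.range k, (a i : F) * (g ^ e) ^ i = 0)
      ↔ (∑ i ∈ Finset.range k, (a i : ℂ) * ζ ^ i = 0) := by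
  have : Fact p.Prime := ⟨hp⟩
  have : CharP F p := charP_of_card_eq_prime_pow (hF.trans hq)
  have hk0 : 0 < k := by omega
  have hβ : IsPrimitiveRoot (g ^ e) k :=
    hg.pow (by have := Nat.one_lt_pow hn.ne' hp.one_lt; omega) (by omega)
  set P : ℤ[X] := ∑ i ∈ range k, C (a i) * X ^ i
  have haeval {A : Type} [CommRing A] (x : A) : aeval x P = ∑ i ∈ range k, (a i : A) * x ^ i := by
    simp [P]
  rw [← haeval, ← haeval]
  refine ⟨fun hβP => ?_, fun hζP => ?_⟩
  · by_contra hζP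
    set d := orderOf (p : ZMod k)
    have hd : 0 < d := by
      refine orderOf_pos_iff.2 (isOfFinOrder_iff_pow_eq_one.2 ⟨n, hn, ?_⟩)
      have : ((p ^ n : ℕ) : ZMod k) = 1 := by rw [← hq, hek]; simp
      exact_mod_cast this
    have hdvd := hβ.pow_orderOf_dvd_cyclotomicNorm hk0 hβP
    have hN0 := cyclotomicNorm_ne_zero hζ hk0 hζP
    rw [show 2 * (d : ℝ) = (2 * d : ℕ) by push_cast; rfl] at hbound
    refine lt_irrefl (((p : ℝ) ^ d) ^ 2) ?_
    calc ((p : ℝ) ^ d) ^ 2 ≤ (cyclotomicNorm k P : ℝ) ^ 2 := by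
          exact_mod_cast Int.natAbs_le_iff_sq_le.1 (Int.natAbs_le_of_dvd_ne_zero hdvd hN0)
      _ ≤ ((k / k.totient) * ∑ i ∈ range k, (a i : ℝ) ^ 2) ^ k.totient :=
          hζ.cyclotomicNorm_sq_le hk0 a
      _ < (p : ℝ) ^ (2 * d) := Real.pow_lt_pow_of_rpow_div_lt (by positivity) (by omega) hbound
      _ = ((p : ℝ) ^ d) ^ 2 := by ring
  · obtain ⟨R, hR⟩ := hζ.cyclotomic_dvd_of_aeval_eq_zero hk0 hζP
    rw [hR, map_mul, hβ.aeval_cyclotomic_eq_zero hk0, zero_mul]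

theorem transfer_eq (p n q e k : ℕ) (hp : p.Prime) (hn : 0 < n) (hq : q = p ^ n)
    (hk : 1 < k) (he : 1 < e) (hek : q = e * k + 1)
    (F : Type) [Field F] [Fintype F] (hF : Fintype.card F = q)
    (g : F) (hg : IsPrimitiveRoot g (q - 1))
    (a : ℕ → ℤ) (ζ : ℂ) (hζ : IsPrimitiveRoot ζ k)
    (hbound : ((((k : ℝ) / (Nat.totient k)) * ∑ i ∈ Finset.range k, (a i : ℝ) ^ 2)
        ^ ((Nat.totient k : ℝ) / (2 * (orderOf (p : ZMod k) : ℝ))) < p)) :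
    (∑ i ∈ Finset.range k, (a i : F) * (g ^ e) ^ i = 0)
      ↔ (∑ i ∈ Finset.range k, (a i : ℂ) * ζ ^ i = 0) :=
  transfer_eq_general p n q e k hp hn hq hk hek F hF g hg a ζ hζ hbound
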